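/- On-shell twisted superpotential as a cubic symmetric function: For every finite family of real numbers Δ₁,…,Δ_n with Δ₁ + ⋯ + Δ_n = 2π, one has Σ_{I=1}^n F(Δ_I) = (1/2)·Σ_{a<b<c} Δ_a Δ_b Δ_c, where the right-hand side is half the third elementary symmetric polynomial of the Δ_I. (Equivalently, since F(u) = u(u − π)(u − 2π)/6, the sum of F over any reals summing to 2π equals e₃(Δ)/2.) -/

import Mathlib

/-!
`Σ F(Δ_I)` is the combination `p₃/6 − π p₂/2 + π² p₁/3` of power sums, while Newton's identities
give `6 e₃ = p₁³ − 3 p₁ p₂ + 2 p₃`; substituting `p₁ = 2π` makes the two agree.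
-/

open Real

/-- The paper's function `F = g₊` on the branch `0 < u < 2π`. -/
noncomputable def F (u : ℝ) : ℝ := u ^ 3 / 6 - π * u ^ 2 / 2 + π ^ 2 * u / 3

open MvPolynomial Finset

namespace MvPolynomial

variable {σ R : Type*} [Fintype σ] [CommRing R]

variable (σ R) in
theorem six_mul_esymm_three :
    6 * esymm σ R 3 = psum σ R 1 ^ 3 - 3 * psum σ R 1 * psum σ R 2 + 2 * psum σ R 3 := by
  have newton₂ := mul_esymm_eq_sum σ R 2
  have newton₃ := mul_esymm_eq_sum σ R 3
  simp only [sum_filter, Nat.sum_antidiagonal_succ, Nat.antidiagonal_zero, sum_singleton]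
    at newton₂ newton₃
  norm_num [esymm_zero, esymm_one] at newton₂ newton₃
  rw [show psum σ R 1 = ∑ i, X i by simp [psum]]
  linear_combination 2 * newton₃ + (∑ i, X i) * newton₂

theorem eval_esymm (f : σ → R) (k : ℕ) :
    eval f (esymm σ R k) = ∑ s ∈ powersetCard k univ, ∏ i ∈ s, f i := by
  simp [esymm, map_sum, map_prod]

theorem eval_psum (f : σ → R) (k : ℕ) : eval f (psum σ R k) = ∑ i, f i ^ k := by
  simp [psum]

end MvPolynomial

theorem sum_F {ι : Type*} (s : Finset ι) (Δ : ι → ℝ) :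
    ∑ i ∈ s, F (Δ i)
      = (∑ i ∈ s, Δ i ^ 3) / 6 - π * (∑ i ∈ s, Δ i ^ 2) / 2 + π ^ 2 * (∑ i ∈ s, Δ i) / 3 := by
  simp only [F, sum_add_distrib, sum_sub_distrib, ← sum_div, ← mul_sum]

/-- On-shell twisted superpotential as a cubic symmetric function: for reals
`Δ₁,…,Δ_n` summing to `2π`, `Σ_I F(Δ_I)` equals half the third elementary
symmetric polynomial of the `Δ_I`. -/
theorem stmt4 (n : ℕ) (Δ : Fin n → ℝ) (h : ∑ i, Δ i = 2 * π) :
    ∑ i, F (Δ i)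
      = 1 / 2 * ∑ s ∈ Finset.powersetCard 3 (Finset.univ : Finset (Fin n)), ∏ i ∈ s, Δ i := by
  have newton := congrArg (eval Δ) (six_mul_esymm_three (Fin n) ℝ)
  simp only [map_add, map_sub, map_mul, map_pow, map_ofNat, eval_esymm, eval_psum, pow_one, h]
    at newton
  rw [sum_F, h]
  linear_combination -newton / 12
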